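/- arXiv:1810.13221 — 2 statements merged into one kernel-verified Lean document; each statement's English description precedes it below -/
import Mathlib

section
/- Let X be a connected n-manifold and Y a nonempty connected closed (n-1)-dimensional submanifold with Hom(H₁(X), ℤ/2ℤ) = 0. Then for every point y ∈ Y, the set (X \ Y) ∪ {y} is path-connected. -/
open CategoryTheory

/-- The singular chain complex of a topological space, obtained by applying the free abelian
group functor levelwise to the singular simplicial set and taking the alternating face map
complex. -/
noncomputable def singularChainComplexFunctor : TopCat ⥤ ChainComplex AddCommGrpCat ℕ :=
  TopCat.toSSet ⋙ ((SimplicialObject.whiskering _ _).obj AddCommGrpCat.free) ⋙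
    AlgebraicTopology.alternatingFaceMapComplex AddCommGrpCat

/-- The `i`-th singular homology functor (with integer coefficients). -/
noncomputable def singularHomologyFunctor (i : ℕ) : TopCat ⥤ AddCommGrpCat :=
  singularChainComplexFunctor ⋙ HomologicalComplex.homologyFunctor _ _ i

/-- `Y` is a locally flat `(n-1)`-dimensional topological submanifold of `X`: every point of
`Y` admits a chart of `X` (a partial homeomorphism into `ℝⁿ`) in which `Y` corresponds to the
hyperplane where the last coordinate vanishes. -/
def IsTopSubmanifoldOfCodimOne (n : ℕ) (hn : 0 < n) {X : Type*} [TopologicalSpace X]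
    (Y : Set X) : Prop :=
  ∀ y ∈ Y, ∃ φ : OpenPartialHomeomorph X (EuclideanSpace ℝ (Fin n)), y ∈ φ.source ∧
    φ.source ∩ Y = φ.source ∩ φ ⁻¹' {z | z ⟨n - 1, by omega⟩ = 0}

/-! Each path component `C` of `Yᶜ` is open and relatively closed in `Yᶜ`, so, `X` being
connected, its closure meets `Y`. In a chart flattening `Y` to a hyperplane, every point of `Y`
near a point of `Y ∩ closure C` is joined to `C` by a segment that leaves the hyperplane at once,
towards the side of `C`. Hence `Y ∩ closure C` is open in `Y`, so it is all of the connected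
`Y`, and every `y ∈ Y` is joined to `C` by a path that meets `Y` only at `y`. -/

open Set Filter Topology

section PathComponent

variable {X : Type*} [TopologicalSpace X]

lemma IsPreconnected.subset_of_isClosed_of_eventually_mem {s t : Set X} (hs : IsPreconnected s)
    (ht : IsClosed t) (hst : (s ∩ t).Nonempty) (h : ∀ x ∈ s ∩ t, ∀ᶠ y in 𝓝[s] x, y ∈ t) :
    s ⊆ t := by
  obtain ⟨x₀, hx₀s, hx₀t⟩ := hst
  intro y hy
  refine (hs.induction₂ (fun a b => a ∈ t ↔ b ∈ t) (fun a ha => ?_)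
    (fun _ _ _ _ _ _ => Iff.trans) (fun _ _ _ _ => Iff.symm) hx₀s hy).1 hx₀t
  by_cases hat : a ∈ t
  · filter_upwards [h a ⟨ha, hat⟩] with b hb using iff_of_true hat hb
  · filter_upwards [mem_nhdsWithin_of_mem_nhds (ht.isOpen_compl.mem_nhds hat)] with b hb
      using iff_of_false hat hb

variable [LocallyPathConnectedSpace X]

lemma closure_pathComponentIn_inter_subset {F : Set X} (hF : IsOpen F) (x : X) :
    closure (pathComponentIn F x) ∩ F ⊆ pathComponentIn F x := by
  rintro w ⟨hwx, hwF⟩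
  obtain ⟨v, hvw, hvx⟩ := mem_closure_iff.1 hwx _ (hF.pathComponentIn w)
    (mem_pathComponentIn_self hwF)
  rw [← pathComponentIn_congr hvx]
  exact hvw.symm

lemma IsClosed.inter_closure_pathComponentIn_compl_nonempty [ConnectedSpace X] {Y : Set X}
    (hY : IsClosed Y) (hYne : Y.Nonempty) {x : X} (hx : x ∉ Y) :
    (Y ∩ closure (pathComponentIn Yᶜ x)).Nonempty := by
  by_contra hempty
  have hsub : closure (pathComponentIn Yᶜ x) ⊆ Yᶜ := fun w hw hwY => hempty ⟨w, hwY, hw⟩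
  have hclosed : IsClosed (pathComponentIn Yᶜ x) := closure_subset_iff_isClosed.1
    fun w hw => closure_pathComponentIn_inter_subset hY.isOpen_compl x ⟨hw, hsub hw⟩
  have huniv := IsClopen.eq_univ ⟨hclosed, hY.isOpen_compl.pathComponentIn x⟩
    ⟨x, mem_pathComponentIn_self hx⟩
  obtain ⟨y, hy⟩ := hYne
  have hyx : y ∈ pathComponentIn Yᶜ x := huniv ▸ mem_univ y
  exact pathComponentIn_subset hyx hy

end PathComponent

section HalfSpace

variable {E : Type*} [AddCommGroup E] [Module ℝ E]

lemma Convex.insert_inter_setOf_pos {s : Set E} (hs : Convex ℝ s) (f : E →ₗ[ℝ] ℝ) {q : E}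
    (hq : q ∈ s) (hfq : f q = 0) : Convex ℝ (insert q (s ∩ {z | 0 < f z})) := by
  have hT : Convex ℝ (s ∩ {z | 0 < f z}) := hs.inter (convex_halfSpace_gt f.isLinear 0)
  refine convex_iff_forall_pos.2 fun x hx y hy a b ha hb hab => ?_
  have hmem : a • x + b • y ∈ s :=
    hs (insert_subset hq inter_subset_left hx) (insert_subset hq inter_subset_left hy)
      ha.le hb.le hab
  rcases hx with rfl | hx <;> rcases hy with rfl | hy
  · exact .inl (Convex.combo_self hab _)
  · exact .inr ⟨hmem, by simpa [hfq] using mul_pos hb hy.2⟩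
  · exact .inr ⟨hmem, by simpa [hfq] using mul_pos ha hx.2⟩
  · exact .inr (hT hx hy ha.le hb.le hab)

variable [TopologicalSpace E] [ContinuousAdd E] [ContinuousSMul ℝ E]

lemma Convex.mem_closure_inter_setOf_pos {s : Set E} (hs : Convex ℝ s) (f : E →ₗ[ℝ] ℝ)
    {q c : E} (hq : q ∈ s) (hfq : f q = 0) (hc : c ∈ s) (hfc : 0 < f c) :
    q ∈ closure (s ∩ {z | 0 < f z}) := by
  refine closure_mono ?_ (segment_subset_closure_openSegment (left_mem_segment ℝ q c))
  rintro _ ⟨a, b, ha, hb, hab, rfl⟩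
  exact ⟨hs hq hc ha.le hb.le hab, by simpa [hfq] using mul_pos hb hfc⟩

end HalfSpace

section Chart

variable {X E : Type*} [TopologicalSpace X] [AddCommGroup E] [Module ℝ E] [TopologicalSpace E]
  [ContinuousAdd E] [ContinuousSMul ℝ E] {φ : OpenPartialHomeomorph X E} {ℓ : E →ₗ[ℝ] ℝ}
  {Y : Set X}

lemma OpenPartialHomeomorph.IsImage.mem_closure_pathComponentIn_and_joinedIn
    (hφY : φ.IsImage Y {z | ℓ z = 0}) {s : Set E} (hs : Convex ℝ s) (hst : s ⊆ φ.target)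
    {q c : X} (hq : q ∈ φ.source) (hqY : q ∈ Y) (hqs : φ q ∈ s) (hc : c ∈ φ.source)
    (hcY : c ∉ Y) (hcs : φ c ∈ s) :
    q ∈ closure (pathComponentIn Yᶜ c) ∧ JoinedIn (Yᶜ ∪ {q}) q c := by
  -- the open half of `s` on the side of `φ c`
  set T := s ∩ {z | 0 < (ℓ (φ c) • ℓ) z}
  have hℓq : ℓ (φ q) = 0 := (hφY.apply_mem_iff hq).2 hqY
  have hℓc : ℓ (φ c) ≠ 0 := fun h => hcY ((hφY.apply_mem_iff hc).1 h)
  have hcT : φ c ∈ T := ⟨hcs, by simpa using mul_self_pos.2 hℓc⟩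
  have hTY : φ.symm '' T ⊆ Yᶜ := by
    rintro _ ⟨z, ⟨hzs, hz⟩, rfl⟩ hzY
    have : ℓ z = 0 := (hφY.symm_apply_mem_iff (hst hzs)).1 hzY
    simp [this] at hz
  have hcont : ∀ {t}, t ⊆ s → ContinuousOn φ.symm t := fun ht =>
    φ.continuousOn_symm.mono (ht.trans hst)
  constructor
  · have hT : φ.symm '' T ⊆ pathComponentIn Yᶜ c :=
      ((hs.inter (convex_halfSpace_gt (ℓ (φ c) • ℓ).isLinear 0)).isPathConnected
        ⟨_, hcT⟩ |>.image' (hcont inter_subset_left)).subset_pathComponentIn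
        ⟨φ c, hcT, φ.left_inv hc⟩ hTY
    refine closure_mono hT ?_
    rw [← φ.left_inv hq]
    exact (φ.continuousAt_symm (φ.map_source hq)).continuousWithinAt.mem_closure_image
      (hs.mem_closure_inter_setOf_pos _ hqs (by simp [hℓq]) hcs hcT.2)
  · have hA := (hs.insert_inter_setOf_pos (ℓ (φ c) • ℓ) hqs (by simp [hℓq])).isPathConnected
      (insert_nonempty _ _) |>.image' (hcont (insert_subset hqs inter_subset_left))
    refine (hA.joinedIn q ⟨φ q, mem_insert _ _, φ.left_inv hq⟩ c
      ⟨φ c, mem_insert_of_mem _ hcT, φ.left_inv hc⟩).mono ?_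
    rw [image_insert_eq, φ.left_inv hq, insert_eq, union_comm]
    exact union_subset_union_left _ hTY

lemma OpenPartialHomeomorph.IsImage.eventually_mem_closure_pathComponentIn_and_joinedIn
    [LocallyConvexSpace ℝ E] (hφY : φ.IsImage Y {z | ℓ z = 0}) {p x : X} (hp : p ∈ φ.source)
    (hpx : p ∈ closure (pathComponentIn Yᶜ x)) :
    ∀ᶠ q in 𝓝[Y] p, q ∈ closure (pathComponentIn Yᶜ x) ∧ JoinedIn (Yᶜ ∪ {q}) q x := by
  obtain ⟨s, ⟨hsp, hs⟩, hst⟩ := (LocallyConvexSpace.convex_basis (𝕜 := ℝ) (φ p)).mem_iff.1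
    (φ.open_target.mem_nhds (φ.map_source hp))
  have hU : φ.source ∩ φ ⁻¹' s ∈ 𝓝 p :=
    inter_mem (φ.open_source.mem_nhds hp) (φ.continuousAt hp hsp)
  obtain ⟨c, ⟨hc, hcs⟩, hcx⟩ := mem_closure_iff_nhds.1 hpx _ hU
  have hcY : c ∉ Y := pathComponentIn_subset hcx
  refine eventually_nhdsWithin_iff.2 (Filter.mem_of_superset hU fun q ⟨hq, hqs⟩ hqY => ?_)
  obtain ⟨hqc, hjoin⟩ := hφY.mem_closure_pathComponentIn_and_joinedIn hs hst hq hqY hqs hc hcY hcs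
  rw [pathComponentIn_congr hcx] at hqc
  exact ⟨hqc, hjoin.trans (hcx.symm.mono subset_union_left)⟩

end Chart

lemma IsTopSubmanifoldOfCodimOne.eventually_mem_closure_pathComponentIn_and_joinedIn
    {n : ℕ} {hn : 0 < n} {X : Type*} [TopologicalSpace X] {Y : Set X}
    (hY : IsTopSubmanifoldOfCodimOne n hn Y) {p x : X} (hp : p ∈ Y)
    (hpx : p ∈ closure (pathComponentIn Yᶜ x)) :
    ∀ᶠ q in 𝓝[Y] p, q ∈ closure (pathComponentIn Yᶜ x) ∧ JoinedIn (Yᶜ ∪ {q}) q x := by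
  obtain ⟨φ, hpφ, hφY⟩ := hY p hp
  exact OpenPartialHomeomorph.IsImage.eventually_mem_closure_pathComponentIn_and_joinedIn
    (ℓ := (EuclideanSpace.proj (⟨n - 1, by omega⟩ : Fin n) : EuclideanSpace ℝ (Fin n) →L[ℝ] ℝ))
    (OpenPartialHomeomorph.IsImage.iff_preimage_eq.2 hφY.symm) hpφ hpx

theorem complement_union_point_isPathConnected_general
    (n : ℕ) (hn : 0 < n) (X : Type) [TopologicalSpace X]
    [ChartedSpace (EuclideanSpace ℝ (Fin n)) X] [ConnectedSpace X]
    (Y : Set X) (hYclosed : IsClosed Y)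
    (hY : IsTopSubmanifoldOfCodimOne n hn Y) (hYconn : IsConnected Y)
    (y : X) (hy : y ∈ Y) :
    IsPathConnected (Yᶜ ∪ {y}) := by
  have := ChartedSpace.locallyPathConnectedSpace (EuclideanSpace ℝ (Fin n)) X
  refine ⟨y, .inr rfl, fun {z} hz => ?_⟩
  rcases hz with hzY | rfl
  · have hYz : Y ⊆ closure (pathComponentIn Yᶜ z) :=
      hYconn.isPreconnected.subset_of_isClosed_of_eventually_mem isClosed_closure
        (hYclosed.inter_closure_pathComponentIn_compl_nonempty hYconn.nonempty hzY)
        fun p ⟨hp, hpz⟩ => (hY.eventually_mem_closure_pathComponentIn_and_joinedIn hp hpz).mono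
          fun _ => And.left
    exact ((hY.eventually_mem_closure_pathComponentIn_and_joinedIn hy (hYz hy)).self_of_nhdsWithin
      hy).2
  · exact JoinedIn.refl (.inr rfl)

/-- Let `X` be a connected `n`-manifold and `Y ⊆ X` a nonempty connected closed
`(n-1)`-dimensional submanifold with `Hom(H₁(X), ℤ/2ℤ) = 0`. Then for every `y ∈ Y` the
set `(X \ Y) ∪ {y}` is path-connected. -/
theorem complement_union_point_isPathConnected
    (n : ℕ) (hn : 0 < n) (X : Type) [TopologicalSpace X]
    [ChartedSpace (EuclideanSpace ℝ (Fin n)) X] [ConnectedSpace X]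
    (Y : Set X) (hYclosed : IsClosed Y)
    (hY : IsTopSubmanifoldOfCodimOne n hn Y) (hYconn : IsConnected Y)
    (hH1 : ∀ f : (singularHomologyFunctor 1).obj (TopCat.of X) →+ ZMod 2, f = 0)
    (y : X) (hy : y ∈ Y) :
    IsPathConnected (Yᶜ ∪ {y}) :=
  complement_union_point_isPathConnected_general n hn X Y hYclosed hY hYconn y hy
end

section
/- Given an inverse sequence of abelian groups (A_i) that is a,d-injective and a,b-surjective, then for every c ≥ a the natural map from the inverse limit lim← A_i to the image of the map A_{c+b} → A_c (sending a compatible sequence (x_i) to x_c) is a group isomorphism. -/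
/-!
Injectivity: a compatible sequence vanishing at level `a` vanishes at every level `e ≥ a`,
because `x_e` is the image of `x_{d+e}`, which maps to `0` in `A_a`; all lower levels are
images of these. Surjectivity: for `n ≥ a`, an element of `A_n` coming from `A_{b+n}` lifts
to `A_{b+n+1}`, hence to an element of `A_{n+1}` coming from `A_{b+n+1}`; iterating by
dependent choice gives a compatible sequence through any element of that image.
-/

open CategoryTheory Opposite

/-- The transition map from level `j` to level `i` (for `i ≤ j`) of an inverse system of
abelian groups indexed by `ℕ`. -/
noncomputable def InvSys.trans (F : ℕᵒᵖ ⥤ AddCommGrpCat) {i j : ℕ} (h : i ≤ j) :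
    F.obj (op j) → F.obj (op i) :=
  F.map (homOfLE h).op

/-- `a,b`-injectivity of an inverse system of abelian groups. -/
def InvSys.IsInjective (F : ℕᵒᵖ ⥤ AddCommGrpCat) (a b : ℕ) : Prop :=
  ∀ c (_ : a ≤ c), ∀ x : F.obj (op (b + c)),
    InvSys.trans F (by omega : a ≤ b + c) x = 0 →
    InvSys.trans F (by omega : c ≤ b + c) x = 0

/-- `a,b`-surjectivity of an inverse system of abelian groups. -/
def InvSys.IsSurjective (F : ℕᵒᵖ ⥤ AddCommGrpCat) (a b : ℕ) : Prop :=
  ∀ c (_ : a ≤ c), ∀ x : F.obj (op c),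
    (∃ y : F.obj (op (b + c)), InvSys.trans F (by omega : c ≤ b + c) y = x) →
    ∀ d (_ : c ≤ d), ∃ z : F.obj (op d), InvSys.trans F (by omega : c ≤ d) z = x

/-- The inverse limit `lim← A_i` of an inverse sequence of abelian groups, realized as the
subgroup of the product consisting of compatible sequences. -/
noncomputable def InvSys.invLim (F : ℕᵒᵖ ⥤ AddCommGrpCat) :
    AddSubgroup (Π i : ℕ, F.obj (op i)) where
  carrier := {x | ∀ i : ℕ, F.map (homOfLE (Nat.le_succ i)).op (x (i + 1)) = x i}
  zero_mem' := by intro i; simp [map_zero]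
  add_mem' := by intro x y hx hy i; simp [map_add, hx i, hy i]
  neg_mem' := by intro x hx i; simp [map_neg, hx i]

/-- The natural map from the inverse limit to the `c`-th group, sending a compatible
sequence `(x_i)` to `x_c`. -/
noncomputable def InvSys.natMap (F : ℕᵒᵖ ⥤ AddCommGrpCat) (c : ℕ) :
    InvSys.invLim F →+ F.obj (op c) :=
  (Pi.evalAddMonoidHom (fun i : ℕ => F.obj (op i)) c).comp (InvSys.invLim F).subtype

namespace InvSys

variable {F : ℕᵒᵖ ⥤ AddCommGrpCat}

theorem trans_trans {i j k : ℕ} (hij : i ≤ j) (hjk : j ≤ k) (x : F.obj (op k)) :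
    trans F hij (trans F hjk x) = trans F (hij.trans hjk) x := by
  show (F.map _ ≫ F.map _) x = _
  rw [← F.map_comp]
  rfl

theorem trans_self {i : ℕ} (x : F.obj (op i)) : trans F le_rfl x = x := by
  show F.map (𝟙 _) x = x
  rw [F.map_id]
  rfl

theorem trans_zero {i j : ℕ} (h : i ≤ j) : trans F h 0 = 0 :=
  map_zero (F.map (homOfLE h).op).hom

theorem mem_invLim_iff {s : Π i : ℕ, F.obj (op i)} :
    s ∈ invLim F ↔ ∀ i, trans F (Nat.le_succ i) (s (i + 1)) = s i :=
  Iff.rfl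

theorem trans_apply_of_mem_invLim {s : Π i : ℕ, F.obj (op i)} (hs : s ∈ invLim F)
    {i j : ℕ} (h : i ≤ j) : trans F h (s j) = s i := by
  induction j, h using Nat.le_induction with
  | base => exact trans_self _
  | succ j hij ih => rw [← trans_trans hij (Nat.le_succ j), mem_invLim_iff.mp hs j, ih]

theorem eq_zero_of_mem_invLim {a d : ℕ} (hinj : IsInjective F a d)
    {s : Π i : ℕ, F.obj (op i)} (hs : s ∈ invLim F) (hsa : s a = 0) : s = 0 := by
  have h_ge : ∀ e, a ≤ e → s e = 0 := fun e he => by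
    have := hinj e he (s (d + e)) (by rw [trans_apply_of_mem_invLim hs, hsa])
    rwa [trans_apply_of_mem_invLim hs] at this
  funext i
  rw [← trans_apply_of_mem_invLim hs (le_max_right a i), h_ge _ (le_max_left a i), trans_zero]
  rfl

theorem natMap_injective {a d c : ℕ} (hinj : IsInjective F a d) (hc : a ≤ c) :
    Function.Injective (natMap F c) := by
  rw [injective_iff_map_eq_zero]
  rintro ⟨s, hs⟩ (hsc : s c = 0)
  have hsa : s a = 0 := by rw [← trans_apply_of_mem_invLim hs hc, hsc, trans_zero]
  exact Subtype.ext (eq_zero_of_mem_invLim hinj hs hsa)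

theorem range_natMap_subset (b c : ℕ) :
    Set.range (natMap F c) ⊆ Set.range (trans F (Nat.le_add_left c b)) := by
  rintro _ ⟨⟨s, hs⟩, rfl⟩
  exact ⟨s (b + c), trans_apply_of_mem_invLim hs _⟩

theorem exists_mem_invLim_of_lift (P : ∀ n, F.obj (op n) → Prop)
    (hP : ∀ n x, P n x → ∃ y, P (n + 1) y ∧ trans F (Nat.le_succ n) y = x)
    {c : ℕ} {x : F.obj (op c)} (hx : P c x) : ∃ s ∈ invLim F, s c = x := by
  choose lift hlift using hP
  let u : ∀ k, {y : F.obj (op (c + k)) // P (c + k) y} :=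
    fun k => Nat.rec ⟨x, hx⟩ (fun k y => ⟨lift _ y.1 y.2, (hlift _ y.1 y.2).1⟩) k
  have hu : ∀ k, trans F (Nat.le_succ (c + k)) (u (k + 1)).1 = (u k).1 :=
    fun k => (hlift _ _ _).2
  have hu_base : ∀ k, trans F (Nat.le_add_right c k) (u k).1 = x := by
    intro k
    induction k with
    | zero => exact trans_self _
    | succ k ih => rw [← trans_trans (Nat.le_add_right c k) (Nat.le_succ _), hu k, ih]
  -- Taking the `n`-th term from level `c + n` avoids casting between `F.obj (op n)`s.
  refine ⟨fun n => trans F (Nat.le_add_left n c) (u n).1, mem_invLim_iff.mpr fun n => ?_,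
    hu_base c⟩
  rw [trans_trans, ← hu n, trans_trans]

theorem IsSurjective.exists_lift {a b : ℕ} (hsurj : IsSurjective F a b) {n : ℕ} (hn : a ≤ n)
    {x : F.obj (op n)} (hx : x ∈ Set.range (trans F (Nat.le_add_left n b))) :
    ∃ y ∈ Set.range (trans F (Nat.le_add_left (n + 1) b)), trans F (Nat.le_succ n) y = x := by
  obtain ⟨z, hz⟩ := hsurj n hn x hx (b + (n + 1)) (by omega)
  exact ⟨_, ⟨z, rfl⟩, by rw [trans_trans, hz]⟩

end InvSys

open InvSys in
/-- If an inverse sequence of abelian groups is `a,d`-injective and `a,b`-surjective, then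
for every `c ≥ a` the natural map from the inverse limit to the image of `A_{c+b} → A_c`
is a group isomorphism, i.e. it is injective and its range is exactly that image. -/
theorem invLim_natMap_bijective_onto_image (F : ℕᵒᵖ ⥤ AddCommGrpCat) (a b d : ℕ)
    (hinj : InvSys.IsInjective F a d) (hsurj : InvSys.IsSurjective F a b)
    (c : ℕ) (hc : a ≤ c) :
    Function.Injective (InvSys.natMap F c) ∧
      Set.range (InvSys.natMap F c) =
        Set.range (InvSys.trans F (by omega : c ≤ b + c)) := by
  refine ⟨natMap_injective hinj hc, (range_natMap_subset b c).antisymm fun x hx => ?_⟩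
  obtain ⟨s, hs, rfl⟩ := exists_mem_invLim_of_lift
    (fun n y => a ≤ n ∧ y ∈ Set.range (trans F (Nat.le_add_left n b)))
    (fun n y ⟨hn, hy⟩ => (hsurj.exists_lift hn hy).imp fun _ h => ⟨⟨hn.step, h.1⟩, h.2⟩)
    ⟨hc, hx⟩
  exact ⟨⟨s, hs⟩, rfl⟩
end
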